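/- Let n ≥ 2 be even and let A be an n×n centrosymmetric Markov matrix. With the block diagonalization S_n⁻¹ A S_n = diag(A1, A2) where A1 = B1 + B2·J (notation as in the block partition of centrosymmetric matrices), the block A1 is an (n/2)×(n/2) Markov matrix. Similarly, if A is a centrosymmetric rate matrix, then A1 is a rate matrix. -/
import Mathlib


open Matrix

/-- A Markov matrix over an arbitrary finite index type. -/
def IsMarkov {ι : Type*} [Fintype ι] (M : Matrix ι ι ℝ) : Prop :=
  (∀ i j, 0 ≤ M i j) ∧ ∀ i, ∑ j, M i j = 1

/-- A rate matrix over an arbitrary finite index type. -/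
def IsRate {ι : Type*} [Fintype ι] [DecidableEq ι] (Q : Matrix ι ι ℝ) : Prop :=
  (∀ i j, i ≠ j → 0 ≤ Q i j) ∧ ∀ i, ∑ j, Q i j = 0

lemma mulJ_apply (m : ℕ) (B : Matrix (Fin m) (Fin m) ℝ) (i j : Fin m) :
    (B * (Matrix.of fun i j : Fin m => if j = i.rev then (1:ℝ) else 0)) i j = B i j.rev := by
  simp only [Matrix.mul_apply, Matrix.of_apply]
  rw [Finset.sum_eq_single j.rev]
  · simp
  · intro b _ hb
    rw [if_neg, mul_zero]
    intro h; exact hb (by rw [h, Fin.rev_rev])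
  · simp

lemma sum_rev (m : ℕ) (f : Fin m → ℝ) : ∑ j, f (Fin.rev j) = ∑ j, f j :=
  Fintype.sum_equiv (Equiv.mk Fin.rev Fin.rev Fin.rev_rev Fin.rev_rev) _ _ (fun _ => rfl)

/-- For an even-order centrosymmetric matrix `A = [[B1, B2],[J B2 J, J B1 J]]`, the
upper block `A1 = B1 + B2·J` of the Fourier transform is Markov whenever `A` is Markov,
and a rate matrix whenever `A` is a rate matrix. -/
theorem upper_block_markov_and_rate
    (m : ℕ) (hm : 1 ≤ m) (B1 B2 : Matrix (Fin m) (Fin m) ℝ) :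
    let J : Matrix (Fin m) (Fin m) ℝ := Matrix.of fun i j => if j = i.rev then 1 else 0
    let A : Matrix (Fin m ⊕ Fin m) (Fin m ⊕ Fin m) ℝ :=
      fromBlocks B1 B2 (J * B2 * J) (J * B1 * J)
    (IsMarkov A → IsMarkov (B1 + B2 * J)) ∧
    (IsRate A → IsRate (B1 + B2 * J)) := by
  intro J A
  have hJ : ∀ (B : Matrix (Fin m) (Fin m) ℝ) i j, (B * J) i j = B i j.rev :=
    fun B i j => mulJ_apply m B i j
  have hrow : ∀ i, ∑ j, (B1 + B2 * J) i j = ∑ j, A (Sum.inl i) j := by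
    intro i
    rw [Fintype.sum_sum_type]
    simp only [Matrix.add_apply, hJ, A, Matrix.fromBlocks_apply₁₁,
      Matrix.fromBlocks_apply₁₂, Finset.sum_add_distrib]
    congr 1
    exact sum_rev m (fun j => B2 i j)
  constructor
  · rintro ⟨hpos, hsum⟩
    constructor
    · intro i j
      have h1 := hpos (Sum.inl i) (Sum.inl j)
      have h2 := hpos (Sum.inl i) (Sum.inr j.rev)
      simp only [A, Matrix.fromBlocks_apply₁₁, Matrix.fromBlocks_apply₁₂] at h1 h2
      simp only [Matrix.add_apply, hJ]
      linarith
    · intro i; rw [hrow]; exact hsum (Sum.inl i)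
  · rintro ⟨hpos, hsum⟩
    constructor
    · intro i j hij
      have h1 := hpos (Sum.inl i) (Sum.inl j) (by simp [hij])
      have h2 := hpos (Sum.inl i) (Sum.inr j.rev) (by simp)
      simp only [A, Matrix.fromBlocks_apply₁₁, Matrix.fromBlocks_apply₁₂] at h1 h2
      simp only [Matrix.add_apply, hJ]
      linarith
    · intro i; rw [hrow]; exact hsum (Sum.inl i)
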